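/- arXiv:1102.3671 — 3 statements merged into one kernel-verified Lean document; each statement's English description precedes it below -/
import Mathlib

section
/- For every real number a > 0, the function f : ℝ × ℝ → ℝ defined by f(t,x) = −2√2·a + 6√2·a / (2 + cos(2·a·x − 8·a³·t)) is smooth (the denominator 2 + cos(2ax − 8a³t) is never zero) and satisfies the modified KdV equation ∂f/∂t + f² · ∂f/∂x + ∂³f/∂x³ = 0 at every point (t,x). -/
/-- Partial derivative with respect to the first coordinate (time). -/
noncomputable def pt (f : ℝ × ℝ → ℝ) : ℝ × ℝ → ℝ :=
  fun p => deriv (fun s => f (s, p.2)) p.1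

/-- Partial derivative with respect to the second coordinate (space). -/
noncomputable def px (f : ℝ × ℝ → ℝ) : ℝ × ℝ → ℝ :=
  fun p => deriv (fun s => f (p.1, s)) p.2

noncomputable def gg (a u : ℝ) : ℝ :=
  -2 * Real.sqrt 2 * a + 6 * Real.sqrt 2 * a / (2 + Real.cos u)

noncomputable def gg1 (a u : ℝ) : ℝ :=
  6 * Real.sqrt 2 * a * Real.sin u / (2 + Real.cos u) ^ 2

noncomputable def gg2 (a u : ℝ) : ℝ :=
  6 * Real.sqrt 2 * a * (2 + 2 * Real.cos u - Real.cos u ^ 2) / (2 + Real.cos u) ^ 3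

noncomputable def gg3 (a u : ℝ) : ℝ :=
  6 * Real.sqrt 2 * a * Real.sin u * (2 + 8 * Real.cos u - Real.cos u ^ 2) / (2 + Real.cos u) ^ 4

lemma hDpos (u : ℝ) : 0 < 2 + Real.cos u := by nlinarith [Real.neg_one_le_cos u]

lemma hDne (u : ℝ) : (2 + Real.cos u) ≠ 0 := ne_of_gt (hDpos u)

lemma hcosD (u : ℝ) : HasDerivAt (fun v => 2 + Real.cos v) (-Real.sin u) u :=
  (Real.hasDerivAt_cos u).const_add 2

lemma hgg (a u : ℝ) : HasDerivAt (gg a) (gg1 a u) u := by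
  have h := ((hasDerivAt_const u (6 * Real.sqrt 2 * a)).div (hcosD u) (hDne u)).const_add
    (-2 * Real.sqrt 2 * a)
  refine h.congr_deriv ?_
  unfold gg1
  field_simp
  ring

lemma hgg1 (a u : ℝ) : HasDerivAt (gg1 a) (gg2 a u) u := by
  have hd2 : (2 + Real.cos u) ^ 2 ≠ 0 := pow_ne_zero _ (hDne u)
  have h := (((Real.hasDerivAt_sin u).const_mul (6 * Real.sqrt 2 * a)).div
    ((hcosD u).pow 2) hd2)
  refine h.congr_deriv ?_
  unfold gg2
  have hs := Real.sin_sq u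
  simp only [Pi.pow_apply]
  field_simp [hDne u]
  ring_nf
  rw [Real.sin_sq]
  ring

lemma hgg2 (a u : ℝ) : HasDerivAt (gg2 a) (gg3 a u) u := by
  have hd3 : (2 + Real.cos u) ^ 3 ≠ 0 := pow_ne_zero _ (hDne u)
  have hnum : HasDerivAt (fun v => 6 * Real.sqrt 2 * a * (2 + 2 * Real.cos v - Real.cos v ^ 2))
      (6 * Real.sqrt 2 * a * (2 * (-Real.sin u) - 2 * Real.cos u * (-Real.sin u))) u := by
    have h1 : HasDerivAt (fun v => 2 + 2 * Real.cos v - Real.cos v ^ 2)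
        (2 * (-Real.sin u) - 2 * Real.cos u ^ 1 * (-Real.sin u)) u := by
      exact (((Real.hasDerivAt_cos u).const_mul 2).const_add 2).sub ((Real.hasDerivAt_cos u).pow 2)
    simpa using h1.const_mul (6 * Real.sqrt 2 * a)
  have h := hnum.div ((hcosD u).pow 3) hd3
  refine h.congr_deriv ?_
  unfold gg3
  have hs := Real.sin_sq u
  simp only [Pi.pow_apply]
  field_simp [hDne u]
  ring_nf

lemma px_of (a : ℝ) (G G' : ℝ → ℝ) (h : ∀ u, HasDerivAt G (G' u) u) :
    px (fun p : ℝ × ℝ => G (2 * a * p.2 - 8 * a ^ 3 * p.1)) =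
      fun p : ℝ × ℝ => 2 * a * G' (2 * a * p.2 - 8 * a ^ 3 * p.1) := by
  funext p
  have hL : HasDerivAt (fun s : ℝ => 2 * a * s - 8 * a ^ 3 * p.1) (2 * a) p.2 := by
    simpa using ((hasDerivAt_id p.2).const_mul (2 * a)).sub_const (8 * a ^ 3 * p.1)
  have key : HasDerivAt (fun s : ℝ => G (2 * a * s - 8 * a ^ 3 * p.1))
      (G' (2 * a * p.2 - 8 * a ^ 3 * p.1) * (2 * a)) p.2 := (h _).comp p.2 hL
  show deriv (fun s : ℝ => G (2 * a * s - 8 * a ^ 3 * p.1)) p.2 = _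
  rw [key.deriv]; ring

/-- The periodic, non-singular function
`f(t,x) = −2√2·a + 6√2·a / (2 + cos(2ax − 8a³t))` is smooth (its denominator
never vanishes) and solves the modified KdV equation
`∂ₜf + f² ∂ₓf + ∂ₓ³f = 0`. -/
theorem mKdV_periodic_solution
    (a : ℝ) (ha : 0 < a) (f : ℝ × ℝ → ℝ)
    (hf : ∀ t x : ℝ, f (t, x) =
      -2 * Real.sqrt 2 * a +
        6 * Real.sqrt 2 * a / (2 + Real.cos (2 * a * x - 8 * a ^ 3 * t))) :
    (∀ t x : ℝ, 2 + Real.cos (2 * a * x - 8 * a ^ 3 * t) ≠ 0) ∧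
    ContDiff ℝ (⊤ : ℕ∞) f ∧
    (∀ p : ℝ × ℝ, pt f p + (f p) ^ 2 * px f p + px^[3] f p = 0) := by
  have hfF : f = fun p : ℝ × ℝ => gg a (2 * a * p.2 - 8 * a ^ 3 * p.1) :=
    funext fun p => hf p.1 p.2
  refine ⟨fun t x => hDne _, ?_, ?_⟩
  · rw [hfF]
    have hg_smooth : ContDiff ℝ (⊤ : ℕ∞) (gg a) := by
      unfold gg
      exact contDiff_const.add (contDiff_const.div (contDiff_const.add Real.contDiff_cos) hDne)
    have hL : ContDiff ℝ (⊤ : ℕ∞) (fun p : ℝ × ℝ => 2 * a * p.2 - 8 * a ^ 3 * p.1) := by fun_prop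
    exact hg_smooth.comp hL
  · have hpx1 : px f = fun p : ℝ × ℝ => 2 * a * gg1 a (2 * a * p.2 - 8 * a ^ 3 * p.1) := by
      rw [hfF]; exact px_of a (gg a) (gg1 a) (hgg a)
    have hpx2 : px (px f) =
        fun p : ℝ × ℝ => 2 * a * (2 * a * gg2 a (2 * a * p.2 - 8 * a ^ 3 * p.1)) := by
      rw [hpx1]
      exact px_of a _ _ (fun u => (hgg1 a u).const_mul (2 * a))
    have hpx3 : px (px (px f)) =
        fun p : ℝ × ℝ => 2 * a * (2 * a * (2 * a * gg3 a (2 * a * p.2 - 8 * a ^ 3 * p.1))) := by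
      rw [hpx2]
      exact px_of a _ _ (fun u => ((hgg2 a u).const_mul (2 * a)).const_mul (2 * a))
    rintro ⟨t, x⟩
    set u : ℝ := 2 * a * x - 8 * a ^ 3 * t with hu
    have hptf : pt f (t, x) = gg1 a u * -(8 * a ^ 3) := by
      rw [hfF]
      show deriv (fun s : ℝ => gg a (2 * a * x - 8 * a ^ 3 * s)) t = _
      have hL : HasDerivAt (fun s : ℝ => 2 * a * x - 8 * a ^ 3 * s) (-(8 * a ^ 3)) t := by
        simpa using ((hasDerivAt_id t).const_mul (8 * a ^ 3)).const_sub (2 * a * x)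
      exact ((hgg a u).comp t hL).deriv
    have hiter : px^[3] f (t, x) = 2 * a * (2 * a * (2 * a * gg3 a u)) := by
      show px (px (px f)) (t, x) = _
      rw [hpx3]
    rw [hiter, hptf, hpx1, hfF]
    show gg1 a u * -(8 * a ^ 3) + (gg a u) ^ 2 * (2 * a * gg1 a u) +
      2 * a * (2 * a * (2 * a * gg3 a u)) = 0
    have hs := Real.sin_sq u
    have h2 : Real.sqrt 2 ^ 2 = 2 := Real.sq_sqrt (by norm_num)
    unfold gg gg1 gg3
    field_simp [hDne u]
    ring_nf
    rw [show Real.sqrt 2 ^ 3 = 2 * Real.sqrt 2 by rw [pow_succ, h2]]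
    ring
end

section
/- Let y : ℝ × ℝ → ℝ be smooth (C^∞) and let w = exp ∘ y, i.e. w(t,x) = exp(y(t,x)), with normalized Taylor coefficients Y and W at the origin. Then for all natural numbers k ≥ 1 and h ≥ 0: k · W(k,h) = Σ_{m=0}^{k−1} Σ_{n=0}^{h} (k−m) · W(m,n) · Y(k−m, h−n); and symmetrically, for all k ≥ 0 and h ≥ 1: h · W(k,h) = Σ_{m=0}^{k} Σ_{n=0}^{h−1} (h−n) · W(m,n) · Y(k−m, h−n). -/
open scoped ContDiff
open Finset Function

local notation "SM" => ContDiff ℝ (∞ : WithTop ℕ∞)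

lemma slice_t_smooth {f : ℝ × ℝ → ℝ} (hf : SM f) (b : ℝ) :
    ContDiff ℝ (∞ : WithTop ℕ∞) (fun s => f (s, b)) :=
  hf.comp (contDiff_id.prodMk contDiff_const)

lemma slice_x_smooth {f : ℝ × ℝ → ℝ} (hf : SM f) (a : ℝ) :
    ContDiff ℝ (∞ : WithTop ℕ∞) (fun u => f (a, u)) :=
  hf.comp (contDiff_const.prodMk contDiff_id)

lemma pt_apply {f : ℝ × ℝ → ℝ} (hf : SM f) (p : ℝ × ℝ) :
    pt f p = fderiv ℝ f p ((1:ℝ), (0:ℝ)) := by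
  have h1 : HasDerivAt (fun s : ℝ => (s, p.2)) ((1:ℝ), (0:ℝ)) p.1 :=
    (hasDerivAt_id p.1).prodMk (hasDerivAt_const p.1 p.2)
  have h2 : HasFDerivAt f (fderiv ℝ f (p.1, p.2)) (p.1, p.2) :=
    (hf.differentiable (by norm_num) (p.1, p.2)).hasFDerivAt
  have h3 : HasDerivAt (fun s => f (s, p.2)) (fderiv ℝ f (p.1, p.2) ((1:ℝ),(0:ℝ))) p.1 :=
    h2.comp_hasDerivAt p.1 h1
  simpa [pt] using h3.deriv

lemma px_apply {f : ℝ × ℝ → ℝ} (hf : SM f) (p : ℝ × ℝ) :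
    px f p = fderiv ℝ f p ((0:ℝ), (1:ℝ)) := by
  have h1 : HasDerivAt (fun u : ℝ => (p.1, u)) ((0:ℝ), (1:ℝ)) p.2 :=
    (hasDerivAt_const p.2 p.1).prodMk (hasDerivAt_id p.2)
  have h2 : HasFDerivAt f (fderiv ℝ f (p.1, p.2)) (p.1, p.2) :=
    (hf.differentiable (by norm_num) (p.1, p.2)).hasFDerivAt
  have h3 : HasDerivAt (fun u => f (p.1, u)) (fderiv ℝ f (p.1, p.2) ((0:ℝ),(1:ℝ))) p.2 :=
    h2.comp_hasDerivAt p.2 h1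
  simpa [px] using h3.deriv

lemma pt_smooth {f : ℝ × ℝ → ℝ} (hf : SM f) : SM (pt f) := by
  have : pt f = fun p => fderiv ℝ f p ((1:ℝ),(0:ℝ)) := funext (pt_apply hf)
  rw [this]
  exact (hf.fderiv_right (by norm_num)).clm_apply contDiff_const

lemma px_smooth {f : ℝ × ℝ → ℝ} (hf : SM f) : SM (px f) := by
  have : px f = fun p => fderiv ℝ f p ((0:ℝ),(1:ℝ)) := funext (px_apply hf)
  rw [this]
  exact (hf.fderiv_right (by norm_num)).clm_apply contDiff_const

lemma px_iter_smooth {f : ℝ × ℝ → ℝ} (hf : SM f) (h : ℕ) : SM (px^[h] f) := by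
  induction h with
  | zero => exact hf
  | succ h ih => rw [Function.iterate_succ_apply']; exact px_smooth ih

lemma pt_iter_smooth {f : ℝ × ℝ → ℝ} (hf : SM f) (k : ℕ) : SM (pt^[k] f) := by
  induction k with
  | zero => exact hf
  | succ k ih => rw [Function.iterate_succ_apply']; exact pt_smooth ih

lemma fderiv_fderiv_apply {f : ℝ × ℝ → ℝ} (hf : SM f) (p v w : ℝ × ℝ) :
    fderiv ℝ (fun q => fderiv ℝ f q v) p w = fderiv ℝ (fderiv ℝ f) p w v := by
  have hc : DifferentiableAt ℝ (fderiv ℝ f) p :=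
    ((hf.fderiv_right (m := ∞) (by norm_num)).differentiable (by norm_num) p)
  rw [fderiv_clm_apply hc (differentiableAt_const v)]
  simp

lemma clairaut {f : ℝ × ℝ → ℝ} (hf : SM f) : pt (px f) = px (pt f) := by
  funext p
  have hdf : ∀ q, HasFDerivAt f (fderiv ℝ f q) q :=
    fun q => (hf.differentiable (by norm_num) q).hasFDerivAt
  have hf' : SM (fderiv ℝ f) := hf.fderiv_right (by norm_num)
  have hdf' : HasFDerivAt (fderiv ℝ f) (fderiv ℝ (fderiv ℝ f) p) p :=
    (hf'.differentiable (by norm_num) p).hasFDerivAt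
  have symm := second_derivative_symmetric hdf hdf' ((1:ℝ),(0:ℝ)) ((0:ℝ),(1:ℝ))
  have e1 : pt (px f) p = fderiv ℝ (fderiv ℝ f) p ((1:ℝ),(0:ℝ)) ((0:ℝ),(1:ℝ)) := by
    rw [pt_apply (px_smooth hf) p]
    have : px f = fun q => fderiv ℝ f q ((0:ℝ),(1:ℝ)) := funext (px_apply hf)
    rw [this, fderiv_fderiv_apply hf]
  have e2 : px (pt f) p = fderiv ℝ (fderiv ℝ f) p ((0:ℝ),(1:ℝ)) ((1:ℝ),(0:ℝ)) := by
    rw [px_apply (pt_smooth hf) p]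
    have : pt f = fun q => fderiv ℝ f q ((1:ℝ),(0:ℝ)) := funext (pt_apply hf)
    rw [this, fderiv_fderiv_apply hf]
  rw [e1, e2, symm]

lemma pt_px_iter {f : ℝ × ℝ → ℝ} (hf : SM f) (h : ℕ) :
    pt (px^[h] f) = px^[h] (pt f) := by
  induction h with
  | zero => rfl
  | succ h ih =>
      rw [Function.iterate_succ_apply', Function.iterate_succ_apply',
        clairaut (px_iter_smooth hf h), ih]

lemma pt_iterate_slice (f : ℝ × ℝ → ℝ) (k : ℕ) (a b : ℝ) :
    pt^[k] f (a, b) = iteratedDeriv k (fun s => f (s, b)) a := by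
  rw [iteratedDeriv_eq_iterate]
  induction k generalizing a with
  | zero => rfl
  | succ k ih =>
      rw [Function.iterate_succ_apply' (f := pt), Function.iterate_succ_apply' (f := deriv)]
      show deriv (fun s => pt^[k] f (s, b)) a = _
      congr 1
      funext s
      exact ih s

lemma px_iterate_slice (f : ℝ × ℝ → ℝ) (h : ℕ) (a b : ℝ) :
    px^[h] f (a, b) = iteratedDeriv h (fun u => f (a, u)) b := by
  rw [iteratedDeriv_eq_iterate]
  induction h generalizing b with
  | zero => rfl
  | succ h ih =>
      rw [Function.iterate_succ_apply' (f := px), Function.iterate_succ_apply' (f := deriv)]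
      show deriv (fun u => px^[h] f (a, u)) b = _
      congr 1
      funext u
      exact ih u
lemma iteratedDeriv_zero_fun' (k : ℕ) (x : ℝ) :
    iteratedDeriv k (fun _ : ℝ => (0:ℝ)) x = 0 := by
  rw [iteratedDeriv_eq_iterate]
  induction k generalizing x with
  | zero => rfl
  | succ k ih =>
      rw [Function.iterate_succ_apply']
      have : deriv^[k] (fun _ : ℝ => (0:ℝ)) = fun _ => (0:ℝ) := funext fun s => ih s
      rw [this, deriv_const]

lemma iteratedDeriv_add' {f g : ℝ → ℝ} (hf : ContDiff ℝ (∞ : WithTop ℕ∞) f)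
    (hg : ContDiff ℝ (∞ : WithTop ℕ∞) g) (n : ℕ) (x : ℝ) :
    iteratedDeriv n (fun s => f s + g s) x = iteratedDeriv n f x + iteratedDeriv n g x := by
  have := iteratedDerivWithin_add (𝕜 := ℝ) (x := x) (s := Set.univ) (n := n)
    (Set.mem_univ x) uniqueDiffOn_univ
    (hf.of_le (by exact_mod_cast le_top)).contDiffWithinAt
    (hg.of_le (by exact_mod_cast le_top)).contDiffWithinAt
  simp only [iteratedDerivWithin_univ] at this
  exact this

lemma iteratedDeriv_fsum {ι : Type*} (T : Finset ι) (c : ι → ℝ → ℝ)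
    (hc : ∀ i ∈ T, ContDiff ℝ (∞ : WithTop ℕ∞) (c i)) (k : ℕ) (x : ℝ) :
    iteratedDeriv k (fun s => ∑ i ∈ T, c i s) x = ∑ i ∈ T, iteratedDeriv k (c i) x := by
  induction T using Finset.cons_induction with
  | empty => simpa using iteratedDeriv_zero_fun' k x
  | cons a T ha ih =>
      simp only [Finset.sum_cons]
      rw [iteratedDeriv_add' (hc a (Finset.mem_cons_self a T))
        (ContDiff.sum fun i hi => hc i (Finset.mem_cons_of_mem hi)) k x,
        ih (fun i hi => hc i (Finset.mem_cons_of_mem hi))]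

lemma leibniz1 (k : ℕ) : ∀ (f g : ℝ → ℝ), ContDiff ℝ (∞ : WithTop ℕ∞) f →
    ContDiff ℝ (∞ : WithTop ℕ∞) g → ∀ x : ℝ,
    iteratedDeriv k (fun s => f s * g s) x =
      ∑ m ∈ Finset.range (k + 1),
        (k.choose m : ℝ) * iteratedDeriv m f x * iteratedDeriv (k - m) g x := by
  induction k with
  | zero => intro f g hf hg x; simp
  | succ k ih =>
      intro f g hf hg x
      have hf' : ContDiff ℝ (∞ : WithTop ℕ∞) (deriv f) := (contDiff_infty_iff_deriv.mp hf).2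
      have hg' : ContDiff ℝ (∞ : WithTop ℕ∞) (deriv g) := (contDiff_infty_iff_deriv.mp hg).2
      have hd : (fun s => f s * g s) = fun s => f s * g s := rfl
      rw [iteratedDeriv_succ']
      have e0 : deriv (fun s => f s * g s) = fun s => deriv f s * g s + f s * deriv g s := by
        funext s
        exact deriv_mul (hf.differentiable (by norm_num) s) (hg.differentiable (by norm_num) s)
      rw [e0, iteratedDeriv_add' (hf'.mul hg) (hf.mul hg') k x, ih _ _ hf' hg x, ih _ _ hf hg' x]
      have ea : ∀ m, iteratedDeriv m (deriv f) x = iteratedDeriv (m+1) f x := by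
        intro m; rw [iteratedDeriv_succ']
      have eb : ∀ m, iteratedDeriv m (deriv g) x = iteratedDeriv (m+1) g x := by
        intro m; rw [iteratedDeriv_succ']
      set a : ℕ → ℝ := fun m => iteratedDeriv m f x with hadef
      set b : ℕ → ℝ := fun m => iteratedDeriv m g x with hbdef
      have S1 : ∑ m ∈ Finset.range (k+1), (k.choose m : ℝ) * iteratedDeriv m (deriv f) x * b (k-m)
          = ∑ m ∈ Finset.range (k+1), (k.choose m : ℝ) * a (m+1) * b (k-m) :=
        Finset.sum_congr rfl fun m _ => by rw [ea m]
      have S2 : ∑ m ∈ Finset.range (k+1), (k.choose m : ℝ) * a m * iteratedDeriv (k-m) (deriv g) x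
          = ∑ m ∈ Finset.range (k+1), (k.choose m : ℝ) * a m * b (k+1-m) := by
        refine Finset.sum_congr rfl fun m hm => ?_
        rw [eb (k-m)]
        have : k - m + 1 = k + 1 - m := by
          have := Finset.mem_range.mp hm; omega
        rw [this]
      rw [S1, S2]
      -- Pascal rearrangement
      have key : ∑ m ∈ Finset.range (k+2), ((k+1).choose m : ℝ) * a m * b (k+1-m)
          = ∑ m ∈ Finset.range (k+1), (k.choose m : ℝ) * a (m+1) * b (k-m)
            + ∑ m ∈ Finset.range (k+1), (k.choose m : ℝ) * a m * b (k+1-m) := by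
        rw [Finset.sum_range_succ' (fun m => ((k+1).choose m : ℝ) * a m * b (k+1-m)) (k+1)]
        have e1 : ∀ m ∈ Finset.range (k+1),
            ((k+1).choose (m+1) : ℝ) * a (m+1) * b (k+1-(m+1))
            = (k.choose m : ℝ) * a (m+1) * b (k-m) + (k.choose (m+1) : ℝ) * a (m+1) * b (k-m) := by
          intro m _
          have : (k+1).choose (m+1) = k.choose m + k.choose (m+1) := Nat.choose_succ_succ k m
          rw [this]
          push_cast
          ring
        rw [Finset.sum_congr rfl e1, Finset.sum_add_distrib]
        have e2 : ∑ m ∈ Finset.range (k+1), (k.choose (m+1) : ℝ) * a (m+1) * b (k-m)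
            = ∑ m ∈ Finset.range k, (k.choose (m+1) : ℝ) * a (m+1) * b (k-m) := by
          rw [Finset.sum_range_succ]
          simp [Nat.choose_succ_self]
        have e3 : ∑ m ∈ Finset.range (k+1), (k.choose m : ℝ) * a m * b (k+1-m)
            = ∑ m ∈ Finset.range k, (k.choose (m+1) : ℝ) * a (m+1) * b (k-m)
              + (k.choose 0 : ℝ) * a 0 * b (k+1) := by
          rw [Finset.sum_range_succ' (fun m => (k.choose m : ℝ) * a m * b (k+1-m)) k]
          congr 1
          refine Finset.sum_congr rfl fun m _ => ?_
          have : k + 1 - (m+1) = k - m := by omega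
          rw [this]
        rw [e2, e3]
        simp [Nat.choose_zero_right]
        ring
      exact key.symm
lemma iteratedDeriv_const_mul' {f : ℝ → ℝ} (hf : ContDiff ℝ (∞ : WithTop ℕ∞) f)
    (c : ℝ) (n : ℕ) (x : ℝ) :
    iteratedDeriv n (fun s => c * f s) x = c * iteratedDeriv n f x := by
  have := iteratedDerivWithin_const_mul (𝕜 := ℝ) (x := x) (s := Set.univ) (n := n)
    (Set.mem_univ x) uniqueDiffOn_univ c (hf.of_le (by exact_mod_cast le_top)).contDiffWithinAt
  simpa [iteratedDerivWithin_univ] using this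

lemma mixed_leibniz {F G : ℝ × ℝ → ℝ} (hF : ContDiff ℝ (∞ : WithTop ℕ∞) F)
    (hG : ContDiff ℝ (∞ : WithTop ℕ∞) G) (k h : ℕ) :
    pt^[k] (px^[h] (fun p => F p * G p)) (0, 0) =
      ∑ m ∈ Finset.range (k + 1), ∑ n ∈ Finset.range (h + 1),
        (k.choose m : ℝ) * (h.choose n : ℝ) *
          pt^[m] (px^[n] F) (0, 0) * pt^[k - m] (px^[h - n] G) (0, 0) := by
  rw [pt_iterate_slice]
  have inner : (fun s => px^[h] (fun p => F p * G p) (s, 0)) =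
      fun s => ∑ n ∈ Finset.range (h + 1),
        (h.choose n : ℝ) * (px^[n] F (s, 0) * px^[h - n] G (s, 0)) := by
    funext s
    rw [px_iterate_slice]
    have eβ : (fun u => (fun p => F p * G p) (s, u)) = fun u => F (s, u) * G (s, u) := rfl
    rw [eβ, leibniz1 h (fun u => F (s, u)) (fun u => G (s, u))
      (slice_x_smooth hF s) (slice_x_smooth hG s) 0]
    refine Finset.sum_congr rfl fun n _ => ?_
    rw [← px_iterate_slice, ← px_iterate_slice]
    ring
  rw [inner]
  have hsm : ∀ n ∈ Finset.range (h + 1), ContDiff ℝ (∞ : WithTop ℕ∞)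
      (fun s => (h.choose n : ℝ) * (px^[n] F (s, 0) * px^[h - n] G (s, 0))) :=
    fun n _ => contDiff_const.mul ((slice_t_smooth (px_iter_smooth hF n) 0).mul
      (slice_t_smooth (px_iter_smooth hG (h - n)) 0))
  rw [iteratedDeriv_fsum _ _ hsm k 0, Finset.sum_comm]
  refine Finset.sum_congr rfl fun n _ => ?_
  rw [iteratedDeriv_const_mul' ((slice_t_smooth (px_iter_smooth hF n) 0).mul
      (slice_t_smooth (px_iter_smooth hG (h - n)) 0)) _ k 0,
    leibniz1 k _ _ (slice_t_smooth (px_iter_smooth hF n) 0)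
      (slice_t_smooth (px_iter_smooth hG (h - n)) 0) 0, Finset.mul_sum]
  refine Finset.sum_congr rfl fun m _ => ?_
  rw [← pt_iterate_slice, ← pt_iterate_slice]
  ring
lemma exp_smooth {y : ℝ × ℝ → ℝ} (hy' : ContDiff ℝ (∞ : WithTop ℕ∞) y) :
    ContDiff ℝ (∞ : WithTop ℕ∞) (fun p => Real.exp (y p)) :=
  Real.contDiff_exp.comp hy'

lemma pt_exp {y : ℝ × ℝ → ℝ} (hy' : ContDiff ℝ (∞ : WithTop ℕ∞) y) :
    pt (fun p => Real.exp (y p)) = fun p => Real.exp (y p) * pt y p := by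
  funext p
  have hs : DifferentiableAt ℝ (fun s => y (s, p.2)) p.1 :=
    ((slice_t_smooth hy' p.2).differentiable (by norm_num)).differentiableAt
  have h2 : HasDerivAt (fun s => y (s, p.2)) (pt y p) p.1 := hs.hasDerivAt
  have h3 := h2.exp
  simpa [pt] using h3.deriv

lemma px_exp {y : ℝ × ℝ → ℝ} (hy' : ContDiff ℝ (∞ : WithTop ℕ∞) y) :
    px (fun p => Real.exp (y p)) = fun p => Real.exp (y p) * px y p := by
  funext p
  have hs : DifferentiableAt ℝ (fun u => y (p.1, u)) p.2 :=
    ((slice_x_smooth hy' p.1).differentiable (by norm_num)).differentiableAt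
  have h2 : HasDerivAt (fun u => y (p.1, u)) (px y p) p.2 := hs.hasDerivAt
  have h3 := h2.exp
  simpa [px] using h3.deriv

lemma main1 {y : ℝ × ℝ → ℝ} (hy' : ContDiff ℝ (∞ : WithTop ℕ∞) y) (j h : ℕ) :
    pt^[j+1] (px^[h] (fun p => Real.exp (y p))) (0, 0) =
      ∑ m ∈ Finset.range (j + 1), ∑ n ∈ Finset.range (h + 1),
        (j.choose m : ℝ) * (h.choose n : ℝ) *
          pt^[m] (px^[n] (fun p => Real.exp (y p))) (0, 0) *
          pt^[j+1-m] (px^[h-n] y) (0, 0) := by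
  have hw := exp_smooth hy'
  have step : pt^[j+1] (px^[h] (fun p => Real.exp (y p)))
      = pt^[j] (px^[h] (fun p => Real.exp (y p) * pt y p)) := by
    rw [Function.iterate_succ_apply, pt_px_iter hw h, pt_exp hy']
  rw [step]
  have ML := mixed_leibniz (F := fun p => Real.exp (y p)) (G := pt y)
    hw (pt_smooth hy') j h
  rw [ML]
  refine Finset.sum_congr rfl fun m hm => Finset.sum_congr rfl fun n _ => ?_
  have e1 : px^[h-n] (pt y) = pt (px^[h-n] y) := (pt_px_iter hy' (h - n)).symm
  rw [e1, ← Function.iterate_succ_apply pt (j - m) (px^[h-n] y)]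
  have e2 : (j - m).succ = j + 1 - m := by have := Finset.mem_range.mp hm; omega
  rw [e2]

lemma main2 {y : ℝ × ℝ → ℝ} (hy' : ContDiff ℝ (∞ : WithTop ℕ∞) y) (k j : ℕ) :
    pt^[k] (px^[j+1] (fun p => Real.exp (y p))) (0, 0) =
      ∑ m ∈ Finset.range (k + 1), ∑ n ∈ Finset.range (j + 1),
        (k.choose m : ℝ) * (j.choose n : ℝ) *
          pt^[m] (px^[n] (fun p => Real.exp (y p))) (0, 0) *
          pt^[k-m] (px^[j+1-n] y) (0, 0) := by
  have hw := exp_smooth hy'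
  have step : px^[j+1] (fun p => Real.exp (y p))
      = px^[j] (fun p => Real.exp (y p) * px y p) := by
    rw [Function.iterate_succ_apply, px_exp hy']
  rw [step]
  have ML := mixed_leibniz (F := fun p => Real.exp (y p)) (G := px y)
    hw (px_smooth hy') k j
  rw [ML]
  refine Finset.sum_congr rfl fun m _ => Finset.sum_congr rfl fun n hn => ?_
  rw [← Function.iterate_succ_apply px (j - n) y]
  have e2 : (j - n).succ = j + 1 - n := by have := Finset.mem_range.mp hn; omega
  rw [e2]

/-- Normalized Taylor coefficient at the origin:
`tcoeff w k h = (1/(k!·h!)) ∂ₜᵏ ∂ₓʰ w (0,0)`. -/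
noncomputable def tcoeff (w : ℝ × ℝ → ℝ) (k h : ℕ) : ℝ :=
  (1 / ((Nat.factorial k : ℝ) * (Nat.factorial h : ℝ))) * (pt^[k] (px^[h] w)) (0, 0)

/-- DTM recurrences for `w = exp ∘ y`, in both the `t`-index and the
`x`-index. -/
theorem dtm_exp_recurrence
    (y : ℝ × ℝ → ℝ) (hy : ContDiff ℝ (⊤ : ℕ∞) y)
    (W Y : ℕ → ℕ → ℝ)
    (hW : ∀ k h, W k h = tcoeff (fun p => Real.exp (y p)) k h)
    (hY : ∀ k h, Y k h = tcoeff y k h) :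
    (∀ (k h : ℕ), 1 ≤ k →
      (k : ℝ) * W k h =
        ∑ m ∈ Finset.range k, ∑ n ∈ Finset.range (h + 1),
          ((k - m : ℕ) : ℝ) * W m n * Y (k - m) (h - n)) ∧
    (∀ (k h : ℕ), 1 ≤ h →
      (h : ℝ) * W k h =
        ∑ m ∈ Finset.range (k + 1), ∑ n ∈ Finset.range h,
          ((h - n : ℕ) : ℝ) * W m n * Y (k - m) (h - n)) := by
  have hy' : ContDiff ℝ (∞ : WithTop ℕ∞) y := hy.of_le (by simp)
  constructor
  · intro k h hk
    obtain ⟨j, rfl⟩ : ∃ j, k = j + 1 := ⟨k - 1, by omega⟩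
    simp only [hW, hY, tcoeff]
    rw [main1 hy' j h]
    simp only [Finset.mul_sum]
    refine Finset.sum_congr rfl fun m hm => Finset.sum_congr rfl fun n hn => ?_
    have hm' : m ≤ j := by have := Finset.mem_range.mp hm; omega
    have hn' : n ≤ h := by have := Finset.mem_range.mp hn; omega
    have natkey : (j+1) * (j.choose m * (h.choose n *
        (m.factorial * (n.factorial * ((j+1-m).factorial * (h-n).factorial)))))
        = (j+1-m) * ((j+1).factorial * h.factorial) := by
      have e : j + 1 - m = (j - m) + 1 := by omega
      rw [e, Nat.factorial_succ, Nat.factorial_succ,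
        ← Nat.choose_mul_factorial_mul_factorial hm',
        ← Nat.choose_mul_factorial_mul_factorial hn']
      ring
    have rkR : ((j:ℝ)+1) * ((j.choose m : ℝ) * ((h.choose n : ℝ) *
        ((m.factorial : ℝ) * ((n.factorial : ℝ) *
          (((j+1-m).factorial : ℝ) * ((h-n).factorial : ℝ))))))
        = ((j+1-m : ℕ) : ℝ) * (((j+1).factorial : ℝ) * (h.factorial : ℝ)) := by
      exact_mod_cast natkey
    have hf1 : ((j+1).factorial : ℝ) ≠ 0 := Nat.cast_ne_zero.mpr (Nat.factorial_ne_zero _)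
    have hf2 : (h.factorial : ℝ) ≠ 0 := Nat.cast_ne_zero.mpr (Nat.factorial_ne_zero _)
    have hf3 : (m.factorial : ℝ) ≠ 0 := Nat.cast_ne_zero.mpr (Nat.factorial_ne_zero _)
    have hf4 : (n.factorial : ℝ) ≠ 0 := Nat.cast_ne_zero.mpr (Nat.factorial_ne_zero _)
    have hf5 : (((j+1-m).factorial : ℝ)) ≠ 0 := Nat.cast_ne_zero.mpr (Nat.factorial_ne_zero _)
    have hf6 : (((h-n).factorial : ℝ)) ≠ 0 := Nat.cast_ne_zero.mpr (Nat.factorial_ne_zero _)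
    push_cast
    field_simp
    linear_combination (pt^[m] (px^[n] fun p => Real.exp (y p)) (0,0)) *
      (pt^[j+1-m] (px^[h-n] y) (0,0)) * rkR
  · intro k h hh
    obtain ⟨j, rfl⟩ : ∃ j, h = j + 1 := ⟨h - 1, by omega⟩
    simp only [hW, hY, tcoeff]
    rw [main2 hy' k j]
    simp only [Finset.mul_sum]
    refine Finset.sum_congr rfl fun m hm => Finset.sum_congr rfl fun n hn => ?_
    have hm' : m ≤ k := by have := Finset.mem_range.mp hm; omega
    have hn' : n ≤ j := by have := Finset.mem_range.mp hn; omega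
    have natkey : (j+1) * (k.choose m * (j.choose n *
        (m.factorial * (n.factorial * ((k-m).factorial * (j+1-n).factorial)))))
        = (j+1-n) * (k.factorial * (j+1).factorial) := by
      have e : j + 1 - n = (j - n) + 1 := by omega
      rw [e, Nat.factorial_succ, Nat.factorial_succ,
        ← Nat.choose_mul_factorial_mul_factorial hm',
        ← Nat.choose_mul_factorial_mul_factorial hn']
      ring
    have rkR : ((j:ℝ)+1) * ((k.choose m : ℝ) * ((j.choose n : ℝ) *
        ((m.factorial : ℝ) * ((n.factorial : ℝ) *
          (((k-m).factorial : ℝ) * ((j+1-n).factorial : ℝ))))))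
        = ((j+1-n : ℕ) : ℝ) * ((k.factorial : ℝ) * ((j+1).factorial : ℝ)) := by
      exact_mod_cast natkey
    have hf1 : ((j+1).factorial : ℝ) ≠ 0 := Nat.cast_ne_zero.mpr (Nat.factorial_ne_zero _)
    have hf2 : (k.factorial : ℝ) ≠ 0 := Nat.cast_ne_zero.mpr (Nat.factorial_ne_zero _)
    have hf3 : (m.factorial : ℝ) ≠ 0 := Nat.cast_ne_zero.mpr (Nat.factorial_ne_zero _)
    have hf4 : (n.factorial : ℝ) ≠ 0 := Nat.cast_ne_zero.mpr (Nat.factorial_ne_zero _)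
    have hf5 : (((k-m).factorial : ℝ)) ≠ 0 := Nat.cast_ne_zero.mpr (Nat.factorial_ne_zero _)
    have hf6 : (((j+1-n).factorial : ℝ)) ≠ 0 := Nat.cast_ne_zero.mpr (Nat.factorial_ne_zero _)
    push_cast
    field_simp
    linear_combination (pt^[m] (px^[n] fun p => Real.exp (y p)) (0,0)) *
      (pt^[k-m] (px^[j+1-n] y) (0,0)) * rkR
end

section
/- Let y : ℝ × ℝ → ℝ be smooth (C^∞) with y(t,x) > 0 for all (t,x), let s be a real number, and let w(t,x) = y(t,x)^s (real power), with normalized Taylor coefficients Y and W at the origin. Then for all natural numbers k ≥ 1 and h ≥ 0: Y(0,0) · W(k,h) = s · W(0,0) · Y(k,h) + (1/k) · Σ_{(m,n), 0 ≤ m ≤ k−1, 0 ≤ n ≤ h, (m,n) ≠ (0,0)} (k−m) · [ s · W(m,n) · Y(k−m, h−n) − Y(m,n) · W(k−m, h−n) ]. -/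
open Finset Function

abbrev Sm (f : ℝ × ℝ → ℝ) : Prop := ContDiff ℝ (⊤ : ℕ∞) f

lemma Sm.dAt {f : ℝ × ℝ → ℝ} (hf : Sm f) (p : ℝ × ℝ) : DifferentiableAt ℝ f p :=
  hf.differentiable (by simp) p

lemma hasDerivAt_fst {f : ℝ × ℝ → ℝ} {p : ℝ × ℝ} (hf : DifferentiableAt ℝ f p) :
    HasDerivAt (fun s => f (s, p.2)) (fderiv ℝ f p (1, 0)) p.1 := by
  have h1 : HasDerivAt (fun s : ℝ => (s, p.2)) (1, 0) p.1 :=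
    (hasDerivAt_id p.1).prodMk (hasDerivAt_const p.1 p.2)
  exact hf.hasFDerivAt.comp_hasDerivAt p.1 h1

lemma hasDerivAt_snd {f : ℝ × ℝ → ℝ} {p : ℝ × ℝ} (hf : DifferentiableAt ℝ f p) :
    HasDerivAt (fun s => f (p.1, s)) (fderiv ℝ f p (0, 1)) p.2 := by
  have h1 : HasDerivAt (fun s : ℝ => (p.1, s)) (0, 1) p.2 :=
    (hasDerivAt_const p.2 p.1).prodMk (hasDerivAt_id p.2)
  exact hf.hasFDerivAt.comp_hasDerivAt p.2 h1

lemma dAt_fst {f : ℝ × ℝ → ℝ} (hf : Sm f) (p : ℝ × ℝ) :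
    DifferentiableAt ℝ (fun s => f (s, p.2)) p.1 :=
  (hasDerivAt_fst (hf.dAt p)).differentiableAt

lemma dAt_snd {f : ℝ × ℝ → ℝ} (hf : Sm f) (p : ℝ × ℝ) :
    DifferentiableAt ℝ (fun s => f (p.1, s)) p.2 :=
  (hasDerivAt_snd (hf.dAt p)).differentiableAt

lemma pt_eq {f : ℝ × ℝ → ℝ} (hf : Sm f) :
    pt f = fun p => fderiv ℝ f p (1, 0) :=
  funext fun p => (hasDerivAt_fst (hf.dAt p)).deriv

lemma px_eq {f : ℝ × ℝ → ℝ} (hf : Sm f) :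
    px f = fun p => fderiv ℝ f p (0, 1) :=
  funext fun p => (hasDerivAt_snd (hf.dAt p)).deriv

lemma sm_fderiv_apply {f : ℝ × ℝ → ℝ} (hf : Sm f) (v : ℝ × ℝ) :
    Sm (fun p => fderiv ℝ f p v) := by
  have h : ContDiff ℝ (⊤ : ℕ∞) (fderiv ℝ f) := hf.fderiv_right (by exact_mod_cast le_top)
  exact (ContinuousLinearMap.apply ℝ ℝ v).contDiff.comp h

lemma sm_pt {f : ℝ × ℝ → ℝ} (hf : Sm f) : Sm (pt f) := by
  rw [pt_eq hf]; exact sm_fderiv_apply hf _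

lemma sm_px {f : ℝ × ℝ → ℝ} (hf : Sm f) : Sm (px f) := by
  rw [px_eq hf]; exact sm_fderiv_apply hf _

lemma pt_px_comm {f : ℝ × ℝ → ℝ} (hf : Sm f) : pt (px f) = px (pt f) := by
  rw [pt_eq (sm_px hf), px_eq (sm_pt hf), px_eq hf, pt_eq hf]
  funext p
  have hd : ContDiff ℝ (⊤ : ℕ∞) (fderiv ℝ f) := hf.fderiv_right (by exact_mod_cast le_top)
  have hdp : DifferentiableAt ℝ (fderiv ℝ f) p := hd.differentiable (by simp) p
  have key : ∀ v u : ℝ × ℝ, fderiv ℝ (fun q => fderiv ℝ f q v) p u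
      = fderiv ℝ (fderiv ℝ f) p u v := by
    intro v u
    have h : HasFDerivAt (fun q => fderiv ℝ f q v)
        ((ContinuousLinearMap.apply ℝ ℝ v).comp (fderiv ℝ (fderiv ℝ f) p)) p :=
      (ContinuousLinearMap.apply ℝ ℝ v).hasFDerivAt.comp p hdp.hasFDerivAt
    rw [h.fderiv]; rfl
  rw [key, key]
  exact second_derivative_symmetric (fun q => (hf.dAt q).hasFDerivAt) hdp.hasFDerivAt _ _


lemma pascal_sum (k : ℕ) (A B : ℕ → ℝ) :
    ∑ m ∈ range (k + 2), ((k + 1).choose m : ℝ) * (A m * B (k + 1 - m)) =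
    ∑ m ∈ range (k + 1), (k.choose m : ℝ) *
      (A (m + 1) * B (k - m) + A m * B (k + 1 - m)) := by
  have hL : ∑ m ∈ range (k + 2), ((k + 1).choose m : ℝ) * (A m * B (k + 1 - m)) =
      (∑ i ∈ range (k + 1), ((k + 1).choose (i + 1) : ℝ) * (A (i + 1) * B (k - i)))
        + A 0 * B (k + 1) := by
    rw [Finset.sum_range_succ' (fun m => ((k + 1).choose m : ℝ) * (A m * B (k + 1 - m))) (k+1)]
    simp [Nat.succ_sub_succ]
  rw [hL]
  have hsplit : ∑ m ∈ range (k + 1), (k.choose m : ℝ) *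
      (A (m + 1) * B (k - m) + A m * B (k + 1 - m)) =
      (∑ m ∈ range (k + 1), (k.choose m : ℝ) * (A (m + 1) * B (k - m)))
      + ∑ m ∈ range (k + 1), (k.choose m : ℝ) * (A m * B (k + 1 - m)) := by
    rw [← Finset.sum_add_distrib]; exact Finset.sum_congr rfl fun m _ => by ring
  rw [hsplit]
  have h2 : ∑ m ∈ range (k + 1), (k.choose m : ℝ) * (A m * B (k + 1 - m)) =
      (∑ i ∈ range k, (k.choose (i + 1) : ℝ) * (A (i + 1) * B (k - i))) + A 0 * B (k + 1) := by
    rw [Finset.sum_range_succ' (fun m => (k.choose m : ℝ) * (A m * B (k + 1 - m))) k]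
    simp [Nat.succ_sub_succ]
  have h3 : ∑ i ∈ range (k + 1), (k.choose (i + 1) : ℝ) * (A (i + 1) * B (k - i)) =
      ∑ i ∈ range k, (k.choose (i + 1) : ℝ) * (A (i + 1) * B (k - i)) := by
    rw [Finset.sum_range_succ]
    simp [Nat.choose_succ_self]
  have h4 : ∀ i ∈ range (k + 1), ((k + 1).choose (i + 1) : ℝ) * (A (i + 1) * B (k - i)) =
      (k.choose i : ℝ) * (A (i + 1) * B (k - i))
      + (k.choose (i + 1) : ℝ) * (A (i + 1) * B (k - i)) := by
    intro i _
    rw [Nat.choose_succ_succ]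
    push_cast
    ring
  rw [Finset.sum_congr rfl h4, Finset.sum_add_distrib, h2, h3]
  ring

section abstractD
variable {D : (ℝ × ℝ → ℝ) → (ℝ × ℝ → ℝ)}
variable (hDs : ∀ f, Sm f → Sm (D f))
variable (hDmul : ∀ f g, Sm f → Sm g →
  D (fun p => f p * g p) = fun p => D f p * g p + f p * D g p)
variable (hDsum : ∀ {ι : Type} (s : Finset ι) (F : ι → ℝ × ℝ → ℝ),
  (∀ i ∈ s, Sm (F i)) → D (fun p => ∑ i ∈ s, F i p) = fun p => ∑ i ∈ s, D (F i) p)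
variable (hDcm : ∀ (c : ℝ) (f), Sm f → D (fun p => c * f p) = fun p => c * D f p)

include hDs in
lemma sm_iter (k : ℕ) {f : ℝ × ℝ → ℝ} (hf : Sm f) : Sm (D^[k] f) := by
  induction k with
  | zero => simpa using hf
  | succ k ih => rw [Function.iterate_succ_apply']; exact hDs _ ih

include hDs hDcm in
lemma iter_const_mul (k : ℕ) (c : ℝ) {f : ℝ × ℝ → ℝ} (hf : Sm f) :
    D^[k] (fun p => c * f p) = fun p => c * D^[k] f p := by
  induction k with
  | zero => simp
  | succ k ih =>
    rw [Function.iterate_succ_apply', ih, Function.iterate_succ_apply',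
      hDcm c _ (sm_iter hDs k hf)]

include hDs hDsum in
lemma iter_sum (k : ℕ) {ι : Type} (s : Finset ι) (F : ι → ℝ × ℝ → ℝ)
    (hF : ∀ i ∈ s, Sm (F i)) :
    D^[k] (fun p => ∑ i ∈ s, F i p) = fun p => ∑ i ∈ s, D^[k] (F i) p := by
  induction k with
  | zero => simp
  | succ k ih =>
    rw [Function.iterate_succ_apply', ih,
      hDsum s _ (fun i hi => sm_iter hDs k (hF i hi))]
    funext p
    exact Finset.sum_congr rfl fun i _ => by
      rw [Function.iterate_succ_apply' D k (F i)]

include hDs hDmul hDsum hDcm in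
lemma iter_leibniz (k : ℕ) {f g : ℝ × ℝ → ℝ} (hf : Sm f) (hg : Sm g) :
    D^[k] (fun p => f p * g p) =
      fun p => ∑ m ∈ range (k + 1), (k.choose m : ℝ) * (D^[m] f p * D^[k - m] g p) := by
  induction k with
  | zero => funext p; simp
  | succ k ih =>
    rw [Function.iterate_succ_apply', ih]
    have hterm : ∀ m ∈ range (k + 1),
        Sm (fun p => (k.choose m : ℝ) * (D^[m] f p * D^[k - m] g p)) := by
      intro m _
      have h := ((sm_iter hDs m hf).mul (sm_iter hDs (k - m) hg)).const_smul
        ((k.choose m : ℝ))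
      simpa [smul_eq_mul] using h
    rw [hDsum (range (k + 1)) _ hterm]
    funext p
    have hstep : ∀ m ∈ range (k + 1),
        D (fun p => (k.choose m : ℝ) * (D^[m] f p * D^[k - m] g p)) p =
        (k.choose m : ℝ) * (D^[m + 1] f p * D^[k - m] g p
          + D^[m] f p * D^[k - m + 1] g p) := by
      intro m _
      rw [hDcm _ _ ((sm_iter hDs m hf).mul (sm_iter hDs (k - m) hg)),
        hDmul _ _ (sm_iter hDs m hf) (sm_iter hDs (k - m) hg)]
      rw [Function.iterate_succ_apply' D m f, Function.iterate_succ_apply' D (k - m) g]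
    rw [Finset.sum_congr rfl hstep]
    have hpas := pascal_sum k (fun m => D^[m] f p) (fun m => D^[m] g p)
    rw [show k + 1 + 1 = k + 2 from rfl, hpas]
    refine Finset.sum_congr rfl fun m hm => ?_
    have hm' : m ≤ k := Nat.lt_succ_iff.mp (Finset.mem_range.mp hm)
    rw [Nat.succ_sub hm']

end abstractD

-- single-step rules for pt
lemma pt_mul {f g : ℝ × ℝ → ℝ} (hf : Sm f) (hg : Sm g) :
    pt (fun p => f p * g p) = fun p => pt f p * g p + f p * pt g p := by
  funext p
  exact deriv_mul (dAt_fst hf p) (dAt_fst hg p)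

lemma pt_sum {ι : Type} (s : Finset ι) (F : ι → ℝ × ℝ → ℝ) (hF : ∀ i ∈ s, Sm (F i)) :
    pt (fun p => ∑ i ∈ s, F i p) = fun p => ∑ i ∈ s, pt (F i) p := by
  funext p
  exact deriv_fun_sum (fun i hi => dAt_fst (hF i hi) p)

lemma pt_cm (c : ℝ) (f : ℝ × ℝ → ℝ) (hf : Sm f) :
    pt (fun p => c * f p) = fun p => c * pt f p := by
  funext p
  exact deriv_const_mul c (dAt_fst hf p)

lemma px_mul {f g : ℝ × ℝ → ℝ} (hf : Sm f) (hg : Sm g) :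
    px (fun p => f p * g p) = fun p => px f p * g p + f p * px g p := by
  funext p
  exact deriv_mul (dAt_snd hf p) (dAt_snd hg p)

lemma px_sum {ι : Type} (s : Finset ι) (F : ι → ℝ × ℝ → ℝ) (hF : ∀ i ∈ s, Sm (F i)) :
    px (fun p => ∑ i ∈ s, F i p) = fun p => ∑ i ∈ s, px (F i) p := by
  funext p
  exact deriv_fun_sum (fun i hi => dAt_snd (hF i hi) p)

lemma px_cm (c : ℝ) (f : ℝ × ℝ → ℝ) (hf : Sm f) :
    px (fun p => c * f p) = fun p => c * px f p := by
  funext p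
  exact deriv_const_mul c (dAt_snd hf p)

lemma sm_pt' : ∀ f, Sm f → Sm (pt f) := fun _ hf => sm_pt hf
lemma sm_px' : ∀ f, Sm f → Sm (px f) := fun _ hf => sm_px hf

lemma sm_pt_iter (k : ℕ) {f : ℝ × ℝ → ℝ} (hf : Sm f) : Sm (pt^[k] f) :=
  sm_iter sm_pt' k hf
lemma sm_px_iter (h : ℕ) {f : ℝ × ℝ → ℝ} (hf : Sm f) : Sm (px^[h] f) :=
  sm_iter sm_px' h hf

lemma pt_iter_leibniz (k : ℕ) {f g : ℝ × ℝ → ℝ} (hf : Sm f) (hg : Sm g) :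
    pt^[k] (fun p => f p * g p) =
      fun p => ∑ m ∈ range (k + 1), (k.choose m : ℝ) * (pt^[m] f p * pt^[k - m] g p) :=
  iter_leibniz sm_pt' (fun _ _ => pt_mul) (fun s F => pt_sum s F) pt_cm k hf hg

lemma px_iter_leibniz (h : ℕ) {f g : ℝ × ℝ → ℝ} (hf : Sm f) (hg : Sm g) :
    px^[h] (fun p => f p * g p) =
      fun p => ∑ n ∈ range (h + 1), (h.choose n : ℝ) * (px^[n] f p * px^[h - n] g p) :=
  iter_leibniz sm_px' (fun _ _ => px_mul) (fun s F => px_sum s F) px_cm h hf hg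

lemma pt_iter_sum (k : ℕ) {ι : Type} (s : Finset ι) (F : ι → ℝ × ℝ → ℝ)
    (hF : ∀ i ∈ s, Sm (F i)) :
    pt^[k] (fun p => ∑ i ∈ s, F i p) = fun p => ∑ i ∈ s, pt^[k] (F i) p :=
  iter_sum sm_pt' (fun s F => pt_sum s F) k s F hF

lemma pt_iter_cm (k : ℕ) (c : ℝ) {f : ℝ × ℝ → ℝ} (hf : Sm f) :
    pt^[k] (fun p => c * f p) = fun p => c * pt^[k] f p :=
  iter_const_mul sm_pt' pt_cm k c hf

lemma px_iter_cm (h : ℕ) (c : ℝ) {f : ℝ × ℝ → ℝ} (hf : Sm f) :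
    px^[h] (fun p => c * f p) = fun p => c * px^[h] f p :=
  iter_const_mul sm_px' px_cm h c hf

lemma px_iter_pt_comm {f : ℝ × ℝ → ℝ} (hf : Sm f) (n : ℕ) :
    px^[n] (pt f) = pt (px^[n] f) := by
  induction n with
  | zero => rfl
  | succ n ih =>
    rw [Function.iterate_succ_apply' px n (pt f), ih,
      ← pt_px_comm (sm_px_iter n hf), Function.iterate_succ_apply' px n f]
lemma tcoeff_pt {f : ℝ × ℝ → ℝ} (hf : Sm f) (k h : ℕ) :
    tcoeff (pt f) k h = ((k + 1 : ℕ) : ℝ) * tcoeff f (k + 1) h := by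
  unfold tcoeff
  rw [px_iter_pt_comm hf h, ← Function.iterate_succ_apply pt k (px^[h] f)]
  have h1 : ((k + 1).factorial : ℝ) = (k + 1) * (k.factorial : ℝ) := by
    rw [Nat.factorial_succ]; push_cast; ring
  rw [h1]
  have hk : ((k.factorial : ℝ)) ≠ 0 := Nat.cast_ne_zero.mpr (Nat.factorial_ne_zero k)
  have hh : ((h.factorial : ℝ)) ≠ 0 := Nat.cast_ne_zero.mpr (Nat.factorial_ne_zero h)
  have hk1 : ((k : ℝ) + 1) ≠ 0 := by positivity
  push_cast
  field_simp

lemma tcoeff_cm (c : ℝ) {f : ℝ × ℝ → ℝ} (hf : Sm f) (k h : ℕ) :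
    tcoeff (fun p => c * f p) k h = c * tcoeff f k h := by
  unfold tcoeff
  rw [px_iter_cm h c hf, pt_iter_cm k c (sm_px_iter h hf)]
  ring

lemma tcoeff_mul {f g : ℝ × ℝ → ℝ} (hf : Sm f) (hg : Sm g) (k h : ℕ) :
    tcoeff (fun p => f p * g p) k h =
      ∑ q ∈ range (k + 1) ×ˢ range (h + 1),
        tcoeff f q.1 q.2 * tcoeff g (k - q.1) (h - q.2) := by
  unfold tcoeff
  rw [px_iter_leibniz h hf hg]
  have hterm : ∀ n ∈ range (h + 1),
      Sm (fun p => (h.choose n : ℝ) * (px^[n] f p * px^[h - n] g p)) := by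
    intro n _
    have hsm := ((sm_px_iter n hf).mul (sm_px_iter (h - n) hg)).const_smul ((h.choose n : ℝ))
    simpa [smul_eq_mul] using hsm
  rw [pt_iter_sum k (range (h + 1)) _ hterm]
  have hstep : ∀ n ∈ range (h + 1),
      pt^[k] (fun p => (h.choose n : ℝ) * (px^[n] f p * px^[h - n] g p)) ((0 : ℝ), (0 : ℝ)) =
      (h.choose n : ℝ) * ∑ m ∈ range (k + 1), (k.choose m : ℝ) *
        (pt^[m] (px^[n] f) (0, 0) * pt^[k - m] (px^[h - n] g) (0, 0)) := by
    intro n _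
    rw [pt_iter_cm k _ ((sm_px_iter n hf).mul (sm_px_iter (h - n) hg)),
      pt_iter_leibniz k (sm_px_iter n hf) (sm_px_iter (h - n) hg)]
  beta_reduce
  rw [Finset.sum_congr rfl hstep, Finset.sum_product]
  rw [Finset.mul_sum, Finset.sum_comm]
  refine Finset.sum_congr rfl fun m hm => ?_
  rw [Finset.mul_sum, Finset.mul_sum]
  refine Finset.sum_congr rfl fun n hn => ?_
  have hm' : m ≤ h := Nat.lt_succ_iff.mp (Finset.mem_range.mp hm)
  have hn' : n ≤ k := Nat.lt_succ_iff.mp (Finset.mem_range.mp hn)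
  rw [Nat.cast_choose ℝ hm', Nat.cast_choose ℝ hn']
  have h1 : ((k.factorial : ℝ)) ≠ 0 := Nat.cast_ne_zero.mpr (Nat.factorial_ne_zero _)
  have h2 : ((h.factorial : ℝ)) ≠ 0 := Nat.cast_ne_zero.mpr (Nat.factorial_ne_zero _)
  have h3 : ((m.factorial : ℝ)) ≠ 0 := Nat.cast_ne_zero.mpr (Nat.factorial_ne_zero _)
  have h4 : ((n.factorial : ℝ)) ≠ 0 := Nat.cast_ne_zero.mpr (Nat.factorial_ne_zero _)
  have h5 : (((k - n).factorial : ℝ)) ≠ 0 := Nat.cast_ne_zero.mpr (Nat.factorial_ne_zero _)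
  have h6 : (((h - m).factorial : ℝ)) ≠ 0 := Nat.cast_ne_zero.mpr (Nat.factorial_ne_zero _)
  field_simp
lemma sm_rpow {y : ℝ × ℝ → ℝ} (hy : Sm y) (hypos : ∀ p, 0 < y p) (s : ℝ) :
    Sm (fun p => y p ^ s) :=
  contDiff_iff_contDiffAt.mpr fun p => hy.contDiffAt.rpow_const_of_ne (ne_of_gt (hypos p))

lemma pde {y : ℝ × ℝ → ℝ} (hy : Sm y) (hypos : ∀ p, 0 < y p) (s : ℝ) :
    (fun p => y p * pt (fun q => y q ^ s) p) =
    (fun p => s * ((fun q => y q ^ s) p * pt y p)) := by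
  funext p
  have hdy0 := hasDerivAt_fst (hy.dAt p)
  have hpty : pt y p = fderiv ℝ y p (1, 0) := hdy0.deriv
  have hdy : HasDerivAt (fun t => y (t, p.2)) (pt y p) p.1 := by rw [hpty]; exact hdy0
  have hdw : HasDerivAt (fun t => y (t, p.2) ^ s)
      (pt y p * s * y (p.1, p.2) ^ (s - 1)) p.1 :=
    hdy.rpow_const (Or.inl (ne_of_gt (hypos _)))
  have hptw : pt (fun q => y q ^ s) p = pt y p * s * y p ^ (s - 1) := hdw.deriv
  rw [hptw]
  have hy0 : y p ≠ 0 := ne_of_gt (hypos p)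
  rw [Real.rpow_sub_one hy0]
  field_simp
/-- DTM recurrence for the real power `w = y^s` (with `y > 0`): for `k ≥ 1`,
`Y(0,0)·W(k,h) = s·W(0,0)·Y(k,h) + (1/k)·Σ_{(m,n)≠(0,0), m≤k−1, n≤h}
(k−m)·(s·W(m,n)·Y(k−m,h−n) − Y(m,n)·W(k−m,h−n))`. -/
theorem dtm_rpow_recurrence
    (y : ℝ × ℝ → ℝ) (hy : ContDiff ℝ (⊤ : ℕ∞) y) (hypos : ∀ p : ℝ × ℝ, 0 < y p)
    (s : ℝ)
    (W Y : ℕ → ℕ → ℝ)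
    (hW : ∀ k h, W k h = tcoeff (fun p => (y p) ^ s) k h)
    (hY : ∀ k h, Y k h = tcoeff y k h) :
    ∀ (k h : ℕ), 1 ≤ k →
      Y 0 0 * W k h =
        s * W 0 0 * Y k h +
          (1 / (k : ℝ)) *
            ∑ q ∈ (Finset.range k ×ˢ Finset.range (h + 1)).filter
                (fun q => q ≠ (0, 0)),
              ((k - q.1 : ℕ) : ℝ) *
                (s * W q.1 q.2 * Y (k - q.1) (h - q.2) -
                  Y q.1 q.2 * W (k - q.1) (h - q.2)) := by
  intro k h hk
  obtain ⟨k', rfl⟩ : ∃ k', k = k' + 1 := ⟨k - 1, (Nat.succ_pred_eq_of_pos hk).symm⟩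
  have hy' : Sm y := hy.of_le (by simp)
  have hws : Sm (fun p => y p ^ s) := sm_rpow hy' hypos s
  set T : Finset (ℕ × ℕ) := Finset.range (k' + 1) ×ˢ Finset.range (h + 1) with hT
  set S : Finset (ℕ × ℕ) := T.filter (fun q => q ≠ (0, 0)) with hS
  set F1 : ℕ × ℕ → ℝ :=
    fun q => Y q.1 q.2 * ((k' + 1 - q.1 : ℕ) : ℝ) * W (k' + 1 - q.1) (h - q.2) with hF1
  set F2 : ℕ × ℕ → ℝ :=
    fun q => W q.1 q.2 * ((k' + 1 - q.1 : ℕ) : ℝ) * Y (k' + 1 - q.1) (h - q.2) with hF2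
  have E : tcoeff (fun p => y p * pt (fun q => y q ^ s) p) k' h =
      tcoeff (fun p => s * ((fun q => y q ^ s) p * pt y p)) k' h := by
    rw [pde hy' hypos s]
  have EL : tcoeff (fun p => y p * pt (fun q => y q ^ s) p) k' h = ∑ q ∈ T, F1 q := by
    rw [tcoeff_mul hy' (sm_pt hws) k' h]
    refine Finset.sum_congr rfl fun q hq => ?_
    have hq1 : q.1 ≤ k' :=
      Nat.lt_succ_iff.mp (Finset.mem_range.mp (Finset.mem_product.mp hq).1)
    rw [tcoeff_pt hws (k' - q.1) (h - q.2)]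
    rw [hF1]
    rw [← hY (q.1) (q.2), ← hW (k' - q.1 + 1) (h - q.2)]
    rw [show k' - q.1 + 1 = k' + 1 - q.1 from (Nat.succ_sub hq1).symm]
    ring
  have ER : tcoeff (fun p => s * ((fun q => y q ^ s) p * pt y p)) k' h =
      s * ∑ q ∈ T, F2 q := by
    rw [tcoeff_cm s (hws.mul (sm_pt hy')), tcoeff_mul hws (sm_pt hy') k' h]
    congr 1
    refine Finset.sum_congr rfl fun q hq => ?_
    have hq1 : q.1 ≤ k' :=
      Nat.lt_succ_iff.mp (Finset.mem_range.mp (Finset.mem_product.mp hq).1)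
    rw [tcoeff_pt hy' (k' - q.1) (h - q.2)]
    rw [hF2, ← hW (q.1) (q.2), ← hY (k' - q.1 + 1) (h - q.2)]
    rw [show k' - q.1 + 1 = k' + 1 - q.1 from (Nat.succ_sub hq1).symm]
    ring
  have E' : ∑ q ∈ T, F1 q = s * ∑ q ∈ T, F2 q := by rw [← EL, ← ER, E]
  have h00 : ((0, 0) : ℕ × ℕ) ∈ T := by
    rw [hT]; exact Finset.mem_product.mpr ⟨Finset.mem_range.mpr (Nat.succ_pos _),
      Finset.mem_range.mpr (Nat.succ_pos _)⟩
  have hsplit : ∀ F : ℕ × ℕ → ℝ, ∑ q ∈ T, F q = F (0, 0) + ∑ q ∈ S, F q := by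
    intro F
    rw [hS, ← Finset.sum_filter_add_sum_filter_not T (fun q => q = (0, 0)) F]
    congr 1
    · rw [Finset.filter_eq', if_pos h00, Finset.sum_singleton]
  rw [hsplit F1, hsplit F2] at E'
  have hF10 : F1 (0, 0) = Y 0 0 * ((k' + 1 : ℕ) : ℝ) * W (k' + 1) h := by simp [hF1]
  have hF20 : F2 (0, 0) = W 0 0 * ((k' + 1 : ℕ) : ℝ) * Y (k' + 1) h := by simp [hF2]
  rw [hF10, hF20] at E'
  have hgs : ∑ q ∈ S,
      ((k' + 1 - q.1 : ℕ) : ℝ) *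
        (s * W q.1 q.2 * Y (k' + 1 - q.1) (h - q.2) -
          Y q.1 q.2 * W (k' + 1 - q.1) (h - q.2)) =
      s * (∑ q ∈ S, F2 q) - ∑ q ∈ S, F1 q := by
    rw [Finset.mul_sum, ← Finset.sum_sub_distrib]
    refine Finset.sum_congr rfl fun q _ => ?_
    rw [hF1, hF2]; ring
  rw [hgs]
  have hK : ((k' + 1 : ℕ) : ℝ) ≠ 0 := by positivity
  have hK' : ((k' + 1 : ℕ) : ℝ) = ((k' : ℝ) + 1) := by push_cast; ring
  rw [hK'] at E'
  push_cast
  field_simp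
  linear_combination E'
end
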